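/- arXiv:1802.08843 — 2 statements merged into one kernel-verified Lean document; each statement's English description precedes it below -/
import Mathlib

section
/- Let k ≥ 2 be an integer and let G be a k-edge-maximal (simple) graph on n vertices with n ≥ k+1. Then |E(G)| ≤ C(k,2) + (n−k)·k, and equality |E(G)| = C(k,2) + (n−k)·k holds if and only if G belongs to the family M(n;k,2). -/
/-- A (finite) hypergraph: a finite vertex set together with a finite set of edges,
    each edge being a finite set of vertices. -/
structure FinHypergraph (α : Type*) where
  verts : Finset α
  edges : Finset (Finset α)

namespace FinHypergraph

variable {α : Type*} [DecidableEq α]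

/-- `H.cut X` is the set of edges of `H` intersecting both `X` and `V(H) \ X`. -/
def cut (H : FinHypergraph α) (X : Finset α) : Finset (Finset α) :=
  H.edges.filter fun e => (e ∩ X).Nonempty ∧ (e ∩ (H.verts \ X)).Nonempty

/-- The edge-connectivity `κ'(H)`: the minimum of `|H.cut X|` over nonempty proper
    subsets `X` of the vertex set. -/
noncomputable def edgeConn (H : FinHypergraph α) : ℕ :=
  sInf {d : ℕ | ∃ X : Finset α, X ⊆ H.verts ∧ X.Nonempty ∧ X ≠ H.verts ∧ d = (H.cut X).card}

/-- `H'` is a subhypergraph of `H`. -/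
def IsSub (H' H : FinHypergraph α) : Prop :=
  H'.verts ⊆ H.verts ∧ H'.edges ⊆ H.edges

/-- The strength `κ̄'(H)`: the maximum edge-connectivity over all subhypergraphs of `H`. -/
noncomputable def strength (H : FinHypergraph α) : ℕ :=
  sSup {d : ℕ | ∃ H' : FinHypergraph α, H'.IsSub H ∧ d = H'.edgeConn}

/-- `H` is `r`-uniform (with all edges inside the vertex set). -/
def IsUniform (H : FinHypergraph α) (r : ℕ) : Prop :=
  ∀ e ∈ H.edges, e ⊆ H.verts ∧ e.card = r

/-- `H + e`: add a new edge. -/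
def addEdge (H : FinHypergraph α) (e : Finset α) : FinHypergraph α :=
  ⟨H.verts, insert e H.edges⟩

/-- `H - X`: delete a set of edges. -/
def deleteEdges (H : FinHypergraph α) (X : Finset (Finset α)) : FinHypergraph α :=
  ⟨H.verts, H.edges \ X⟩

/-- The subhypergraph induced by a vertex subset `S`. -/
def induce (H : FinHypergraph α) (S : Finset α) : FinHypergraph α :=
  ⟨S, H.edges.filter fun e => e ⊆ S⟩

/-- `H` is a `k`-edge-maximal `r`-uniform hypergraph: `κ̄'(H) ≤ k`, but adding any
    missing `r`-subset of the vertex set as an edge raises the strength above `k`. -/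
def IsEdgeMaximal (H : FinHypergraph α) (k r : ℕ) : Prop :=
  H.IsUniform r ∧ H.strength ≤ k ∧
    ∀ e : Finset α, e ⊆ H.verts → e.card = r → e ∉ H.edges →
      k + 1 ≤ (H.addEdge e).strength

/-- The degree of a vertex: the number of edges containing it. -/
def degree (H : FinHypergraph α) (v : α) : ℕ :=
  (H.edges.filter fun e => v ∈ e).card

/-- The minimum degree `δ(H)`. -/
noncomputable def minDegree (H : FinHypergraph α) : ℕ :=
  sInf {d : ℕ | ∃ v ∈ H.verts, d = H.degree v}

/-- `X` is a minimum edge-cut of `H`: it is an edge-cut and has cardinality `κ'(H)`. -/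
def IsMinEdgeCut (H : FinHypergraph α) (X : Finset (Finset α)) : Prop :=
  (∃ Y : Finset α, Y ⊆ H.verts ∧ Y.Nonempty ∧ Y ≠ H.verts ∧ X = H.cut Y) ∧
    X.card = H.edgeConn

/-- The family `M(n; k, r)` (with `t = t(k,r)` given as a parameter): start from a complete
    `r`-uniform hypergraph on `t` vertices and repeatedly add a new vertex together with `k`
    new `r`-element edges through it whose remaining vertices are old vertices. -/
inductive MFamily (k r t : ℕ) : FinHypergraph α → Prop
  | base (V : Finset α) (hV : V.card = t) :
      MFamily k r t ⟨V, V.powersetCard r⟩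
  | step (H : FinHypergraph α) (v : α) (E : Finset (Finset α)) :
      MFamily k r t H → v ∉ H.verts → E.card = k →
      (∀ e ∈ E, v ∈ e ∧ e ⊆ insert v H.verts ∧ e.card = r) →
      MFamily k r t ⟨insert v H.verts, H.edges ∪ E⟩

end FinHypergraph

/-! Induction on the number of vertices. A graph on `m` vertices has strength at most `m - 1`
(a vertex cut has at most `m - 1` edges), so a `k`-edge-maximal graph on at most `k + 1` vertices
is complete. Otherwise a minimum edge cut `(S, V \ S)` has at most `k` edges, and both sides
induce `k`-edge-maximal graphs. If both sides have at least two vertices, the bounds for the sides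
plus the `k` cut edges fall strictly below the bound for `G`. If one side is a single vertex `v`,
then `G` is `G - v` plus at most `k` edges at `v`: this gives the bound, and in the case of
equality the recursive construction of `M(n; k, 2)`. -/

lemma Finset.eq_pair_of_card_eq_two {α : Type*} [DecidableEq α] {e : Finset α} (h : e.card = 2)
    {a b : α} (ha : a ∈ e) (hb : b ∈ e) (hab : a ≠ b) : e = {a, b} :=
  (Finset.eq_of_subset_of_card_le (Finset.insert_subset ha (Finset.singleton_subset_iff.2 hb))
    (by rw [h, Finset.card_pair hab])).symm

namespace FinHypergraph

open Finset

variable {α : Type*}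

lemma IsSub.refl (H : FinHypergraph α) : H.IsSub H :=
  ⟨subset_rfl, subset_rfl⟩

lemma IsSub.trans {H₁ H₂ H₃ : FinHypergraph α} (h₁₂ : H₁.IsSub H₂) (h₂₃ : H₂.IsSub H₃) :
    H₁.IsSub H₃ :=
  ⟨h₁₂.1.trans h₂₃.1, h₁₂.2.trans h₂₃.2⟩

lemma singleton_ne_verts (H : FinHypergraph α) (h : 2 ≤ H.verts.card) (v : α) :
    {v} ≠ H.verts :=
  fun hv => by rw [← hv, card_singleton] at h; omega

variable [DecidableEq α]

section Connectivity

lemma isSub_induce (H : FinHypergraph α) {S : Finset α} (hS : S ⊆ H.verts) :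
    (H.induce S).IsSub H :=
  ⟨hS, filter_subset _ _⟩

lemma edgeConn_le_card_cut (H : FinHypergraph α) {X : Finset α} (hX : X ⊆ H.verts)
    (hne : X.Nonempty) (hXV : X ≠ H.verts) : H.edgeConn ≤ (H.cut X).card :=
  Nat.sInf_le ⟨X, hX, hne, hXV, rfl⟩

lemma edgeConn_eq_zero_of_card_lt_two (H : FinHypergraph α) (h : H.verts.card < 2) :
    H.edgeConn = 0 := by
  have hempty : {d | ∃ X ⊆ H.verts, X.Nonempty ∧ X ≠ H.verts ∧ d = (H.cut X).card} = ∅ :=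
    Set.eq_empty_of_forall_notMem fun _ ⟨X, hX, hne, hXV, _⟩ =>
      hXV (eq_of_subset_of_card_le hX (by have := hne.card_pos; omega))
  simp [edgeConn, hempty]

lemma exists_card_cut_eq_edgeConn (H : FinHypergraph α) (h : 2 ≤ H.verts.card) :
    ∃ X ⊆ H.verts, X.Nonempty ∧ X ≠ H.verts ∧ (H.cut X).card = H.edgeConn := by
  obtain ⟨v, hv⟩ := card_pos.1 (by omega : 0 < H.verts.card)
  have hne : {d | ∃ X ⊆ H.verts, X.Nonempty ∧ X ≠ H.verts ∧ d = (H.cut X).card}.Nonempty :=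
    ⟨_, {v}, singleton_subset_iff.2 hv, singleton_nonempty v, H.singleton_ne_verts h v, rfl⟩
  obtain ⟨X, hX, hXne, hXV, hconn⟩ := Nat.sInf_mem hne
  exact ⟨X, hX, hXne, hXV, hconn.symm⟩

lemma edgeConn_le_card_edges (H : FinHypergraph α) : H.edgeConn ≤ H.edges.card := by
  rcases lt_or_ge H.verts.card 2 with h | h
  · simp [H.edgeConn_eq_zero_of_card_lt_two h]
  · obtain ⟨X, -, -, -, hconn⟩ := H.exists_card_cut_eq_edgeConn h
    exact hconn ▸ card_le_card (filter_subset _ _)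

lemma bddAbove_edgeConn_isSub (H : FinHypergraph α) :
    BddAbove {d | ∃ H' : FinHypergraph α, H'.IsSub H ∧ d = H'.edgeConn} := by
  refine ⟨H.edges.card, ?_⟩
  rintro _ ⟨H', hH', rfl⟩
  exact H'.edgeConn_le_card_edges.trans (card_le_card hH'.2)

lemma edgeConn_le_strength {H' H : FinHypergraph α} (h : H'.IsSub H) :
    H'.edgeConn ≤ H.strength :=
  le_csSup H.bddAbove_edgeConn_isSub ⟨H', h, rfl⟩

lemma strength_le {H : FinHypergraph α} {k : ℕ}
    (h : ∀ H' : FinHypergraph α, H'.IsSub H → H'.edgeConn ≤ k) : H.strength ≤ k :=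
  csSup_le ⟨_, H, IsSub.refl H, rfl⟩ fun _ ⟨H', hH', hd⟩ => hd ▸ h H' hH'

lemma exists_isSub_edgeConn_eq_strength (H : FinHypergraph α) :
    ∃ H' : FinHypergraph α, H'.IsSub H ∧ H'.edgeConn = H.strength := by
  have hne : {d | ∃ H' : FinHypergraph α, H'.IsSub H ∧ d = H'.edgeConn}.Nonempty :=
    ⟨_, H, IsSub.refl H, rfl⟩
  obtain ⟨H', hH', hd⟩ := Nat.sSup_mem hne H.bddAbove_edgeConn_isSub
  exact ⟨H', hH', hd.symm⟩

lemma edgeConn_le_card_cut_of_isSub {H G : FinHypergraph α} {S : Finset α} (hH : H.IsSub G)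
    (hmeet : (H.verts ∩ S).Nonempty) (hout : ¬ H.verts ⊆ S) :
    H.edgeConn ≤ (G.cut S).card := by
  refine (H.edgeConn_le_card_cut inter_subset_left hmeet
    fun h => hout (h ▸ inter_subset_right)).trans (card_le_card fun f hf => ?_)
  simp only [cut, mem_filter] at hf ⊢
  obtain ⟨hfH, ⟨a, ha⟩, ⟨b, hb⟩⟩ := hf
  simp only [mem_inter, mem_sdiff] at ha hb
  exact ⟨hH.2 hfH, ⟨a, mem_inter.2 ⟨ha.1, ha.2.2⟩⟩,
    ⟨b, mem_inter.2 ⟨hb.1, mem_sdiff.2 ⟨hH.1 hb.2.1, fun hbS => hb.2.2 ⟨hb.2.1, hbS⟩⟩⟩⟩⟩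

lemma cut_sdiff (H : FinHypergraph α) {S : Finset α} (hS : S ⊆ H.verts) :
    H.cut (H.verts \ S) = H.cut S := by
  simp only [cut, Finset.sdiff_sdiff_eq_self hS, and_comm]

lemma cut_addEdge_of_subset (G : FinHypergraph α) {e S : Finset α} (he : e ⊆ S) :
    (G.addEdge e).cut S = G.cut S := by
  rw [cut, addEdge, filter_insert, if_neg]
  · rfl
  · rintro ⟨-, x, hx⟩
    simp only [mem_inter, mem_sdiff] at hx
    exact hx.2.2 (he hx.1)

lemma exists_card_cut_eq_edgeConn_two_mul_card_le (H : FinHypergraph α) (h : 2 ≤ H.verts.card) :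
    ∃ S ⊆ H.verts, S.Nonempty ∧ 2 * S.card ≤ H.verts.card ∧ (H.cut S).card = H.edgeConn := by
  obtain ⟨S, hS, hSne, hSV, hconn⟩ := H.exists_card_cut_eq_edgeConn h
  have hT := card_sdiff_of_subset hS
  by_cases hsmall : 2 * S.card ≤ H.verts.card
  · exact ⟨S, hS, hSne, hsmall, hconn⟩
  · refine ⟨H.verts \ S, sdiff_subset, ?_, by omega, H.cut_sdiff hS ▸ hconn⟩
    exact sdiff_nonempty.2 fun hVS => hSV (hS.antisymm hVS)

end Connectivity

section Graph

lemma card_cut_singleton_le (H : FinHypergraph α) (h2 : ∀ e ∈ H.edges, e.card = 2)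
    {v : α} (hv : v ∈ H.verts) : (H.cut {v}).card ≤ H.verts.card - 1 := by
  calc (H.cut {v}).card ≤ ((H.verts.erase v).image fun w => ({v, w} : Finset α)).card := by
        refine card_le_card fun e he => ?_
        simp only [cut, mem_filter] at he
        obtain ⟨heH, ⟨x, hx⟩, w, hw⟩ := he
        simp only [mem_inter, mem_sdiff, mem_singleton] at hx hw
        obtain ⟨hxe, rfl⟩ := hx
        exact mem_image.2 ⟨w, mem_erase.2 ⟨hw.2.2, hw.2.1⟩,
          (eq_pair_of_card_eq_two (h2 e heH) hxe hw.1 (Ne.symm hw.2.2)).symm⟩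
    _ ≤ (H.verts.erase v).card := card_image_le
    _ = H.verts.card - 1 := card_erase_of_mem hv

lemma strength_le_card_verts_sub_one (H : FinHypergraph α) (h2 : ∀ e ∈ H.edges, e.card = 2) :
    H.strength ≤ H.verts.card - 1 := by
  refine strength_le fun H' hH' => ?_
  have hcard := card_le_card hH'.1
  rcases lt_or_ge H'.verts.card 2 with hsmall | hbig
  · simp [H'.edgeConn_eq_zero_of_card_lt_two hsmall]
  · obtain ⟨v, hv⟩ := card_pos.1 (by omega : 0 < H'.verts.card)
    calc H'.edgeConn ≤ (H'.cut {v}).card :=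
          H'.edgeConn_le_card_cut (singleton_subset_iff.2 hv) (singleton_nonempty v)
            (H'.singleton_ne_verts hbig v)
      _ ≤ H'.verts.card - 1 := H'.card_cut_singleton_le (fun e he => h2 e (hH'.2 he)) hv
      _ ≤ H.verts.card - 1 := by omega

lemma cut_induce_verts (H : FinHypergraph α) (h2 : ∀ e ∈ H.edges, e.card = 2) {X : Finset α}
    (hX : X ⊆ H.verts) : (H.induce H.verts).cut X = H.cut X := by
  ext f
  refine ⟨fun hf => ?_, fun hf => ?_⟩
  · obtain ⟨hfV, hcross⟩ := mem_filter.1 hf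
    exact mem_filter.2 ⟨(mem_filter.1 hfV).1, hcross⟩
  · obtain ⟨hfE, hcross⟩ := mem_filter.1 hf
    obtain ⟨a, ha⟩ := hcross.1
    obtain ⟨b, hb⟩ := hcross.2
    rw [mem_inter] at ha hb
    have hf_eq := eq_pair_of_card_eq_two (h2 f hfE) ha.1 hb.1
      fun hab => (mem_sdiff.1 hb.2).2 (hab ▸ ha.2)
    refine mem_filter.2 ⟨mem_filter.2 ⟨hfE, ?_⟩, hcross⟩
    rw [hf_eq]
    exact insert_subset (hX ha.2) (singleton_subset_iff.2 (mem_sdiff.1 hb.2).1)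

lemma edgeConn_induce_verts (H : FinHypergraph α) (h2 : ∀ e ∈ H.edges, e.card = 2) :
    (H.induce H.verts).edgeConn = H.edgeConn := by
  unfold edgeConn
  congr 1
  ext d
  refine exists_congr fun X => and_congr_right fun hX => ?_
  rw [cut_induce_verts H h2 hX]
  rfl

end Graph

section EdgeCount

lemma card_edges_eq_add_card_cut (G : FinHypergraph α) (hu : G.IsUniform 2) (S : Finset α) :
    G.edges.card = (G.induce S).edges.card + (G.induce (G.verts \ S)).edges.card
      + (G.cut S).card := by
  have hinside : (G.edges.filter (¬ · ⊆ S)).filter (· ⊆ G.verts \ S)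
      = (G.induce (G.verts \ S)).edges := by
    rw [filter_filter]
    refine filter_congr fun e he => and_iff_right_of_imp fun heT heS => ?_
    obtain ⟨x, hx⟩ := card_pos.1 (by have := (hu e he).2; omega : 0 < e.card)
    exact (mem_sdiff.1 (heT hx)).2 (heS hx)
  have hcrossing : (G.edges.filter (¬ · ⊆ S)).filter (¬ · ⊆ G.verts \ S) = G.cut S := by
    rw [filter_filter]
    refine filter_congr fun e he => ?_
    simp only [not_subset, Finset.Nonempty, mem_inter, mem_sdiff]
    constructor
    · rintro ⟨⟨a, hae, haS⟩, b, hbe, hbT⟩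
      exact ⟨⟨b, hbe, by_contra fun hbS => hbT ⟨(hu e he).1 hbe, hbS⟩⟩,
        a, hae, (hu e he).1 hae, haS⟩
    · rintro ⟨⟨a, hae, haS⟩, b, hbe, -, hbS⟩
      exact ⟨⟨b, hbe, hbS⟩, a, hae, fun ha => ha.2 haS⟩
  rw [← card_filter_add_card_filter_not (s := G.edges) (· ⊆ S),
    ← card_filter_add_card_filter_not (s := G.edges.filter (¬ · ⊆ S)) (· ⊆ G.verts \ S),
    hinside, hcrossing, add_assoc]
  rfl

lemma card_edges_eq_add_card_cut_singleton (G : FinHypergraph α) (hu : G.IsUniform 2) (v : α) :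
    G.edges.card = (G.induce (G.verts \ {v})).edges.card + (G.cut {v}).card := by
  have hnone : (G.induce {v}).edges = ∅ :=
    filter_false_of_mem fun e he hev => by
      have := card_le_card hev
      rw [(hu e he).2, card_singleton] at this
      omega
  rw [G.card_edges_eq_add_card_cut hu {v}, hnone, card_empty, zero_add]

end EdgeCount

section EdgeMaximal

variable {G : FinHypergraph α} {k : ℕ}

lemma IsEdgeMaximal.edges_eq_powersetCard (hG : G.IsEdgeMaximal k 2)
    (hcard : G.verts.card ≤ k + 1) : G.edges = G.verts.powersetCard 2 := by
  refine (subset_iff.2 fun e he => mem_powersetCard.2 (hG.1 e he)).antisymm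
    fun e he => by_contra fun hne => ?_
  rw [mem_powersetCard] at he
  have h2 : ∀ f ∈ (G.addEdge e).edges, f.card = 2 := by
    intro f hf
    rcases mem_insert.1 hf with rfl | hf
    exacts [he.2, (hG.1 f hf).2]
  have : k + 1 ≤ G.verts.card - 1 :=
    (hG.2.2 e he.1 he.2 hne).trans ((G.addEdge e).strength_le_card_verts_sub_one h2)
  omega

lemma IsEdgeMaximal.edgeConn_le (hG : G.IsEdgeMaximal k 2) : G.edgeConn ≤ k :=
  (edgeConn_le_strength (IsSub.refl G)).trans hG.2.1

/-- A subgraph of `G + e` of connectivity `> k` cannot straddle the cut `S`, which has at most `k`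
edges, and cannot avoid `S`, since it would then lie in `G`; so it lies in `G[S] + e` once its
edges leaving its own vertex set are dropped. -/
lemma IsEdgeMaximal.succ_le_strength_induce_addEdge (hG : G.IsEdgeMaximal k 2) {S : Finset α}
    (hS : S ⊆ G.verts) (hcut : (G.cut S).card ≤ k) {e : Finset α} (heS : e ⊆ S)
    (he2 : e.card = 2) (heG : e ∉ G.edges) : k + 1 ≤ ((G.induce S).addEdge e).strength := by
  obtain ⟨hu, hstr, hmax⟩ := hG
  obtain ⟨H, hH, hconn⟩ := (G.addEdge e).exists_isSub_edgeConn_eq_strength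
  have hk : k + 1 ≤ H.edgeConn := hconn ▸ hmax e (heS.trans hS) he2 heG
  have h2 : ∀ f ∈ H.edges, f.card = 2 := fun f hf => by
    rcases mem_insert.1 (hH.2 hf) with rfl | hf
    exacts [he2, (hu f hf).2]
  have hedge : ∀ f ∈ (H.induce H.verts).edges, f = e ∨ f ∈ G.edges ∧ f ⊆ H.verts := fun f hf => by
    obtain ⟨hfH, hfV⟩ := mem_filter.1 hf
    exact (mem_insert.1 (hH.2 hfH)).imp_right fun hfG => ⟨hfG, hfV⟩
  by_cases hin : H.verts ⊆ S
  · have hsub : (H.induce H.verts).IsSub ((G.induce S).addEdge e) := by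
      refine ⟨hin, fun f hf => ?_⟩
      rcases hedge f hf with rfl | ⟨hfG, hfV⟩
      exacts [mem_insert_self _ _, mem_insert_of_mem (mem_filter.2 ⟨hfG, hfV.trans hin⟩)]
    calc k + 1 ≤ H.edgeConn := hk
      _ = (H.induce H.verts).edgeConn := (H.edgeConn_induce_verts h2).symm
      _ ≤ _ := edgeConn_le_strength hsub
  by_cases hmeet : (H.verts ∩ S).Nonempty
  · have := edgeConn_le_card_cut_of_isSub hH hmeet hin
    rw [cut_addEdge_of_subset G heS] at this
    omega
  · have hsub : (H.induce H.verts).IsSub G := by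
      refine ⟨hH.1, fun f hf => ?_⟩
      rcases hedge f hf with rfl | ⟨hfG, -⟩
      · obtain ⟨x, hx⟩ := card_pos.1 (by omega : 0 < f.card)
        exact absurd ⟨x, mem_inter.2 ⟨(mem_filter.1 hf).2 hx, heS hx⟩⟩ hmeet
      · exact hfG
    have := edgeConn_le_strength hsub
    rw [H.edgeConn_induce_verts h2] at this
    omega

lemma IsEdgeMaximal.induce (hG : G.IsEdgeMaximal k 2) {S : Finset α} (hS : S ⊆ G.verts)
    (hcut : (G.cut S).card ≤ k) : (G.induce S).IsEdgeMaximal k 2 := by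
  refine ⟨fun e he => ?_, ?_, fun e heS he2 hnot => ?_⟩
  · obtain ⟨heG, heS⟩ := mem_filter.1 he
    exact ⟨heS, (hG.1 e heG).2⟩
  · exact strength_le fun H hH =>
      (edgeConn_le_strength (hH.trans (G.isSub_induce hS))).trans hG.2.1
  · exact hG.succ_le_strength_induce_addEdge hS hcut heS he2 fun h => hnot (mem_filter.2 ⟨h, heS⟩)

lemma IsEdgeMaximal.induce_sdiff (hG : G.IsEdgeMaximal k 2) {S : Finset α} (hS : S ⊆ G.verts)
    (hcut : (G.cut S).card ≤ k) : (G.induce (G.verts \ S)).IsEdgeMaximal k 2 :=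
  hG.induce sdiff_subset ((G.cut_sdiff hS).symm ▸ hcut)

end EdgeMaximal

section Bound

/-- The largest number of edges of a `k`-edge-maximal graph on `m` vertices (for `k ≥ 2`):
`C(m, 2)` up to `m = k + 1`, then growing by `k` per vertex. -/
def maderBound (k m : ℕ) : ℕ := (min m k).choose 2 + (m - k) * k

lemma maderBound_of_le_succ {k m : ℕ} (h : m ≤ k + 1) : maderBound k m = m.choose 2 := by
  rcases h.lt_or_eq with h | rfl
  · rw [maderBound, min_eq_left (by omega), Nat.sub_eq_zero_of_le (by omega), zero_mul, add_zero]
  · rw [maderBound, min_eq_right (by omega), Nat.add_sub_cancel_left, one_mul,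
      Nat.choose_succ_succ', Nat.choose_one_right, add_comm]

lemma maderBound_succ {k m : ℕ} (h : k ≤ m) : maderBound k (m + 1) = maderBound k m + k := by
  rw [maderBound, maderBound, min_eq_right h, min_eq_right (by omega),
    show m + 1 - k = m - k + 1 by omega, add_one_mul, add_assoc]

lemma maderBound_of_le {k m : ℕ} (h : k ≤ m) : maderBound k m = k.choose 2 + (m - k) * k := by
  rw [maderBound, min_eq_right h]

lemma two_mul_cast_choose_two (m : ℕ) : (2 : ℚ) * (m.choose 2 : ℚ) = m * (m - 1) := by
  rw [Nat.cast_choose_two]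
  ring

lemma maderBound_add_add_lt {k a b : ℕ} (hk : 2 ≤ k) (ha : 2 ≤ a) (hb : 2 ≤ b)
    (hab : k + 2 ≤ a + b) : maderBound k a + maderBound k b + k < maderBound k (a + b) := by
  have hA := two_mul_cast_choose_two a
  have hB := two_mul_cast_choose_two b
  have hK := two_mul_cast_choose_two k
  have hkab : k ≤ a + b := by omega
  rw [maderBound_of_le hkab, maderBound, maderBound]
  qify [hkab] at hk ha hb hab ⊢
  rcases le_total a k with hak | hka <;> rcases le_total b k with hbk | hkb
  · rw [min_eq_left hak, min_eq_left hbk, Nat.sub_eq_zero_of_le hak, Nat.sub_eq_zero_of_le hbk]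
    qify at hak hbk ⊢
    nlinarith [mul_nonneg (sub_nonneg.2 hak) (sub_nonneg.2 hbk),
      mul_nonneg (sub_nonneg.2 hab) (sub_nonneg.2 hak),
      mul_nonneg (sub_nonneg.2 hab) (sub_nonneg.2 hbk)]
  · rw [min_eq_left hak, min_eq_right hkb, Nat.sub_eq_zero_of_le hak]
    qify [hkb] at hak ⊢
    nlinarith [mul_nonneg (sub_nonneg.2 hak) (sub_nonneg.2 ha)]
  · rw [min_eq_right hka, min_eq_left hbk, Nat.sub_eq_zero_of_le hbk]
    qify [hka] at hbk ⊢
    nlinarith [mul_nonneg (sub_nonneg.2 hbk) (sub_nonneg.2 hb)]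
  · rw [min_eq_right hka, min_eq_right hkb]
    qify [hka, hkb]
    nlinarith

end Bound

section MFamily

variable {k r t : ℕ} {H : FinHypergraph α}

lemma MFamily.isUniform (h : MFamily k r t H) : H.IsUniform r := by
  induction h with
  | base V _ => exact fun e he => mem_powersetCard.1 he
  | step H v E _ _ _ hE ih =>
    intro e he
    rcases mem_union.1 he with he | he
    · exact ⟨(ih e he).1.trans (subset_insert v H.verts), (ih e he).2⟩
    · exact (hE e he).2

lemma MFamily.card_verts_ge (h : MFamily k r t H) : t ≤ H.verts.card := by
  induction h with
  | base V hV => exact hV.ge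
  | step H v E _ hv _ _ ih => rw [card_insert_of_notMem hv]; omega

lemma MFamily.card_edges (h : MFamily k 2 (k + 1) H) :
    H.edges.card = maderBound k H.verts.card := by
  induction h with
  | base V hV => rw [card_powersetCard, hV, maderBound_of_le_succ le_rfl]
  | step H v E hH hv hEk hE ih =>
    have hdisj : Disjoint H.edges E :=
      disjoint_left.2 fun e heH heE => hv ((hH.isUniform e heH).1 (hE e heE).1)
    have hkH : k ≤ H.verts.card := by have := hH.card_verts_ge; omega
    change (H.edges ∪ E).card = maderBound k (insert v H.verts).card
    rw [card_union_of_disjoint hdisj, hEk, ih, card_insert_of_notMem hv, maderBound_succ hkH]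

lemma MFamily.of_induce_sdiff_singleton {G : FinHypergraph α} {v : α} (hu : G.IsUniform 2)
    (hv : v ∈ G.verts) (hcut : (G.cut {v}).card = k)
    (h : MFamily k 2 t (G.induce (G.verts \ {v}))) : MFamily k 2 t G := by
  have hverts : insert v (G.verts \ {v}) = G.verts := by
    rw [sdiff_singleton_eq_erase, insert_erase hv]
  have hvcut : ∀ e ∈ G.cut {v}, v ∈ e := fun e he => by
    obtain ⟨x, hx⟩ := (mem_filter.1 he).2.1
    rw [mem_inter, mem_singleton] at hx
    exact hx.2 ▸ hx.1
  have hdisj : Disjoint (G.induce (G.verts \ {v})).edges (G.cut {v}) :=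
    disjoint_left.2 fun e he hecut =>
      (mem_sdiff.1 ((mem_filter.1 he).2 (hvcut e hecut))).2 (mem_singleton_self v)
  have hedges : (G.induce (G.verts \ {v})).edges ∪ G.cut {v} = G.edges :=
    eq_of_subset_of_card_le (union_subset (filter_subset _ _) (filter_subset _ _))
      (by rw [card_union_of_disjoint hdisj, ← G.card_edges_eq_add_card_cut_singleton hu v])
  have := MFamily.step _ v _ h (fun hv' => (mem_sdiff.1 hv').2 (mem_singleton_self v)) hcut
    fun e he => ⟨hvcut e he, hverts.symm ▸ (hu e (mem_filter.1 he).1).1,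
      (hu e (mem_filter.1 he).1).2⟩
  rwa [show (G.induce (G.verts \ {v})).verts = G.verts \ {v} from rfl, hverts, hedges] at this

end MFamily

theorem IsEdgeMaximal.card_edges_le_maderBound_and_mFamily_of_eq {k : ℕ} (hk : 2 ≤ k)
    {G : FinHypergraph α} (hG : G.IsEdgeMaximal k 2) :
    G.edges.card ≤ maderBound k G.verts.card ∧
      (G.edges.card = maderBound k G.verts.card → k + 1 ≤ G.verts.card →
        MFamily k 2 (k + 1) G) := by
  induction hm : G.verts.card using Nat.strong_induction_on generalizing G with
  | _ m ih =>
  rcases le_or_gt m (k + 1) with hsmall | hlarge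
  · have hcomplete := hG.edges_eq_powersetCard (hm ▸ hsmall)
    refine ⟨by rw [hcomplete, card_powersetCard, hm, maderBound_of_le_succ hsmall], fun _ hkm => ?_⟩
    have hbase := MFamily.base (k := k) (r := 2) (t := k + 1) G.verts (by omega)
    rwa [← hcomplete] at hbase
  obtain ⟨S, hS, hSne, hhalf, hconn⟩ := G.exists_card_cut_eq_edgeConn_two_mul_card_le (by omega)
  have hcut : (G.cut S).card ≤ k := hconn ▸ hG.edgeConn_le
  have hT := card_sdiff_of_subset hS
  have hS1 := hSne.card_pos
  by_cases hS2 : 2 ≤ S.card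
  · obtain ⟨hSle, -⟩ := ih S.card (by omega) (hG.induce hS hcut) rfl
    obtain ⟨hTle, -⟩ := ih (G.verts \ S).card (by omega) (hG.induce_sdiff hS hcut) rfl
    have hlt := maderBound_add_add_lt hk hS2 (show 2 ≤ (G.verts \ S).card by omega) (by omega)
    rw [show S.card + (G.verts \ S).card = m by omega] at hlt
    have := G.card_edges_eq_add_card_cut hG.1 S
    exact ⟨by omega, fun _ _ => by omega⟩
  obtain ⟨v, rfl⟩ := card_eq_one.1 (show S.card = 1 by omega)
  have hv : v ∈ G.verts := singleton_subset_iff.1 hS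
  obtain ⟨hTle, hTeq⟩ := ih (G.verts \ {v}).card (by omega) (hG.induce_sdiff hS hcut) rfl
  have hcount := G.card_edges_eq_add_card_cut_singleton hG.1 v
  have hstep := maderBound_succ (show k ≤ (G.verts \ {v}).card by omega)
  rw [show (G.verts \ {v}).card + 1 = m by omega] at hstep
  refine ⟨by omega, fun heq _ => ?_⟩
  exact MFamily.of_induce_sdiff_singleton hG.1 hv (by omega) (hTeq (by omega) (by omega))

end FinHypergraph

/-- Mader. Let `k ≥ 2` and let `G` be a `k`-edge-maximal simple graph
(a `2`-uniform hypergraph) on `n ≥ k+1` vertices. Then `|E(G)| ≤ C(k,2) + (n-k)·k`, with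
equality iff `G ∈ M(n;k,2)` (here `t(k,2) = k+1`). -/
theorem mader_upper_bound {α : Type*} [DecidableEq α] (k n : ℕ) (hk : 2 ≤ k)
    (G : FinHypergraph α) (hG : G.IsEdgeMaximal k 2)
    (hn : G.verts.card = n) (hnk : k + 1 ≤ n) :
    G.edges.card ≤ k.choose 2 + (n - k) * k ∧
      (G.edges.card = k.choose 2 + (n - k) * k ↔ FinHypergraph.MFamily k 2 (k + 1) G) := by
  have hbound : FinHypergraph.maderBound k n = k.choose 2 + (n - k) * k :=
    FinHypergraph.maderBound_of_le (by omega)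
  obtain ⟨hle, hfamily⟩ := hG.card_edges_le_maderBound_and_mFamily_of_eq hk
  rw [hn, hbound] at hle hfamily
  refine ⟨hle, fun heq => hfamily heq (hn ▸ hnk), fun hM => ?_⟩
  rw [hM.card_edges, hn, hbound]
end

section
/- Let n, r, n_1 be integers with 2 ≤ r ≤ n−1 and 2 ≤ n_1 ≤ n/2. Then C(n,r) − C(n_1,r) − C(n−n_1,r) > C(n−1,r−1), where C(a,b) denotes the binomial coefficient (taken to be 0 when b > a). -/
/-!
Pascal's rule gives `C(n,r) = C(n-1,r-1) + C(n-1,r)`, so it suffices that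
`C(n₁,r) + C(m,r) < C(n₁ + m - 1, r)` for `m = n - n₁ ≥ n₁`. If `r > m` the left side
vanishes. Otherwise, expanding `C(n₁ + (m - 1), r)` by Vandermonde's identity, the three
terms indexed by `(r,0)`, `(0,r)` and `(1,r-1)` already give
`C(n₁,r) + C(m-1,r) + n₁ C(m-1,r-1)`, which beats `C(n₁,r) + C(m,r)` because `n₁ ≥ 2`
and `C(m,r) = C(m-1,r) + C(m-1,r-1)` with `C(m-1,r-1) > 0`.
-/

open Finset

namespace Nat

theorem choose_add_choose_add_mul_choose_le_add_choose {a b r : ℕ} (hr : 2 ≤ r) :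
    a.choose r + b.choose r + a * b.choose (r - 1) ≤ (a + b).choose r := by
  have hsub : ({(r, 0), (0, r), (1, r - 1)} : Finset (ℕ × ℕ)) ⊆ antidiagonal r := by
    simp only [insert_subset_iff, singleton_subset_iff, HasAntidiagonal.mem_antidiagonal]
    omega
  calc a.choose r + b.choose r + a * b.choose (r - 1)
      = ∑ p ∈ ({(r, 0), (0, r), (1, r - 1)} : Finset (ℕ × ℕ)), a.choose p.1 * b.choose p.2 := by
        rw [sum_insert (by simp; omega), sum_insert (by simp), sum_singleton]
        simp [add_assoc]
    _ ≤ (a + b).choose r := by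
        rw [add_choose_eq]
        exact sum_le_sum_of_subset hsub

theorem choose_add_choose_lt_choose_add_sub_one {a b r : ℕ} (ha : 2 ≤ a) (hr : 2 ≤ r)
    (hrb : r ≤ b) : a.choose r + b.choose r < (a + b - 1).choose r := by
  obtain ⟨c, rfl⟩ : ∃ c, b = c + 1 := ⟨b - 1, by omega⟩
  obtain ⟨s, rfl⟩ : ∃ s, r = s + 1 := ⟨r - 1, by omega⟩
  have hvandermonde := choose_add_choose_add_mul_choose_le_add_choose (a := a) (b := c) hr
  rw [add_tsub_cancel_right] at hvandermonde
  have hpos : 0 < c.choose s := choose_pos (by omega)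
  have htwice : 2 * c.choose s ≤ a * c.choose s := Nat.mul_le_mul_right _ ha
  rw [choose_succ_succ', show a + (c + 1) - 1 = a + c by omega]
  omega

end Nat

/-- Let `2 ≤ r ≤ n-1` and `2 ≤ n₁ ≤ n/2`. Then
`C(n,r) - C(n₁,r) - C(n-n₁,r) > C(n-1,r-1)`. -/
theorem choose_cut_gt {n r n₁ : ℕ} (hr : 2 ≤ r) (hrn : r ≤ n - 1)
    (hn₁ : 2 ≤ n₁) (hn₁n : 2 * n₁ ≤ n) :
    ((n - 1).choose (r - 1) : ℤ) <
      (n.choose r : ℤ) - (n₁.choose r : ℤ) - ((n - n₁).choose r : ℤ) := by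
  have hpascal : n.choose r = (n - 1).choose (r - 1) + (n - 1).choose r :=
    Nat.choose_eq_choose_pred_add (by omega) (by omega)
  have hsplit : n₁.choose r + (n - n₁).choose r < (n - 1).choose r := by
    rcases le_or_gt r (n - n₁) with hrm | hrm
    · simpa [show n₁ + (n - n₁) - 1 = n - 1 by omega] using
        Nat.choose_add_choose_lt_choose_add_sub_one hn₁ hr hrm
    · rw [Nat.choose_eq_zero_of_lt (by omega), Nat.choose_eq_zero_of_lt hrm]
      exact Nat.choose_pos hrn
  omega
end
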